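/- arXiv:2309.16596 — 5 statements merged into one kernel-verified Lean document; each statement's English description precedes it below -/
import Mathlib

section
/- Let H and H̃ = H + V be Hermitian matrices of the same size. Let P project onto the eigenstates of H with eigenvalues in an interval [a,b], separated from the other eigenvalues of H by a gap of at least Δ. If ‖V‖ ≤ Δ/4, then there exists a spectral projector P̃ of H̃ onto eigenvalues in [a−Δ/4, b+Δ/4], separated from the remaining eigenvalues of H̃ by a gap at least Δ/2, and ‖P − P̃‖ ≤ 8‖V‖/Δ. -/
open Matrix
open scoped Matrix.Norms.L2Operator Classical

/-!
Diagonalise `H = U Λ U*` and `H + V = W Μ W*`. The unitary `M = U* W` then solves the Sylvester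
equation `M Μ - Λ M = R` with `R = U* V W`, so `‖R‖ = ‖V‖`. If a diagonal projection `D` picks
entries of `Λ` within `L` of some centre `c` and `E` picks entries of `Μ` at distance at least
`L + δ` from `c` (or the other way round), the equation forces `‖D M E‖ ≤ ‖R‖ / δ`.

Taking for `D` the whole spectrum of `H` and for `E` a single eigenvalue `μ` of `H + V` gives
Weyl's bound: `μ` lies within `‖V‖ ≤ Δ/4` of the spectrum of `H`, which yields the gap for `H + V`.
With `c` the midpoint of `[a, b]`, the difference of the two spectral projectors is
`U (D M (1 - E) - (1 - D) M E) W*`, and both blocks are of the separated kind above.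
-/

noncomputable def specProj {n : ℕ} {H : Matrix (Fin n) (Fin n) ℂ}
    (hH : H.IsHermitian) (s : Set ℝ) : Matrix (Fin n) (Fin n) ℂ :=
  (hH.eigenvectorUnitary : Matrix (Fin n) (Fin n) ℂ) *
    Matrix.diagonal (fun i => if hH.eigenvalues i ∈ s then (1 : ℂ) else 0) *
    star (hH.eigenvectorUnitary : Matrix (Fin n) (Fin n) ℂ)

theorem norm_le_div_of_mul_eq_mul_add {A : Type*} [NormedRing A] {X Y P Q Q' : A} {L δ : ℝ}
    (hX : X * Q = P * X + Y) (hQ : Q * Q' = 1) (hP : ‖P‖ ≤ L) (hQ' : ‖Q'‖ ≤ (L + δ)⁻¹)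
    (hδ : 0 < δ) : ‖X‖ ≤ ‖Y‖ / δ := by
  have hL : 0 ≤ L := (norm_nonneg P).trans hP
  have h : ‖X‖ ≤ (L * ‖X‖ + ‖Y‖) * (L + δ)⁻¹ :=
    calc ‖X‖ = ‖(P * X + Y) * Q'‖ := by rw [← hX, mul_assoc, hQ, mul_one]
      _ ≤ (‖P‖ * ‖X‖ + ‖Y‖) * ‖Q'‖ :=
        (norm_mul_le _ _).trans <| by
          gcongr
          exact (norm_add_le _ _).trans (by gcongr; exact norm_mul_le _ _)
      _ ≤ (L * ‖X‖ + ‖Y‖) * (L + δ)⁻¹ := by gcongr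
  rw [le_mul_inv_iff₀ (by positivity)] at h
  rw [le_div_iff₀ hδ]
  linarith

theorem Unitary.star_mul_sub_mul_eq {R : Type*} [Ring R] [StarRing R] {U W : R}
    (hU : U ∈ unitary R) (hW : W ∈ unitary R) {H K Λ Μ : R} (hH : star U * H * U = Λ)
    (hK : star W * K * W = Μ) : star U * (K - H) * W = star U * W * Μ - Λ * (star U * W) := by
  rw [← hH, ← hK]
  symm
  calc _ = star U * (W * star W) * K * W - star U * H * (U * star U) * W := by noncomm_ring
    _ = _ := by
      rw [Unitary.mul_star_self_of_mem hU, Unitary.mul_star_self_of_mem hW]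
      noncomm_ring

theorem CStarRing.norm_star_mul_mul {E : Type*} [NormedRing E] [StarRing E] [CStarRing E]
    {U W : E} (hU : U ∈ unitary E) (hW : W ∈ unitary E) (V : E) : ‖star U * V * W‖ = ‖V‖ := by
  rw [CStarRing.norm_mul_mem_unitary _ hW, CStarRing.norm_mem_unitary_mul _ (Unitary.star_mem hU)]

theorem CStarRing.norm_mul_mul_star_sub_mul_mul_star {E : Type*} [NormedRing E] [StarRing E]
    [CStarRing E] {U W : E} (hU : U ∈ unitary E) (hW : W ∈ unitary E) (D F : E) :
    ‖U * D * star U - W * F * star W‖ = ‖D * (star U * W) - star U * W * F‖ := by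
  have h : U * D * star U - W * F * star W = U * (D * (star U * W) - star U * W * F) * star W :=
    calc _ = U * D * star U * (W * star W) - U * star U * W * F * star W := by
          rw [Unitary.mul_star_self_of_mem hU, Unitary.mul_star_self_of_mem hW, mul_one, one_mul]
      _ = _ := by noncomm_ring
  rw [h, ← star_star U, CStarRing.norm_star_mul_mul (Unitary.star_mem hU) (Unitary.star_mem hW)]

theorem Matrix.IsHermitian.star_eigenvectorUnitary_mul_mul {n : Type*} [Fintype n]
    [DecidableEq n] {A : Matrix n n ℂ} (hA : A.IsHermitian) :
    star (hA.eigenvectorUnitary : Matrix n n ℂ) * A * hA.eigenvectorUnitary =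
      diagonal (fun i ↦ (hA.eigenvalues i : ℂ)) := by
  simpa [Function.comp_def] using hA.conjStarAlgAut_star_eigenvectorUnitary

section eigenIndicator

variable {ι : Type*} [DecidableEq ι]

/-- `specProj hH s` is `U * eigenIndicator hH.eigenvalues s * star U` by definition. -/
noncomputable def eigenIndicator (f : ι → ℝ) (s : Set ℝ) : Matrix ι ι ℂ :=
  diagonal fun i ↦ if f i ∈ s then 1 else 0

@[simp]
theorem conjTranspose_eigenIndicator (f : ι → ℝ) (s : Set ℝ) :
    (eigenIndicator f s)ᴴ = eigenIndicator f s := by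
  rw [eigenIndicator, diagonal_conjTranspose]
  congr 1
  ext i
  split_ifs <;> simp_all

theorem one_sub_eigenIndicator (f : ι → ℝ) (s : Set ℝ) :
    1 - eigenIndicator f s = eigenIndicator f sᶜ := by
  rw [eigenIndicator, eigenIndicator, ← diagonal_one, diagonal_sub]
  congr 1
  ext i
  by_cases h : f i ∈ s <;> simp [h]

theorem eigenIndicator_univ (f : ι → ℝ) : eigenIndicator f Set.univ = 1 := by
  simp [eigenIndicator]

variable [Fintype ι]

noncomputable def sylvesterOp (lam mu : ι → ℝ) (M : Matrix ι ι ℂ) : Matrix ι ι ℂ :=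
  M * diagonal (fun j ↦ (mu j : ℂ)) - diagonal (fun i ↦ (lam i : ℂ)) * M

theorem conjTranspose_sylvesterOp (lam mu : ι → ℝ) (M : Matrix ι ι ℂ) :
    (sylvesterOp lam mu M)ᴴ = -sylvesterOp mu lam Mᴴ := by
  ext i j
  simp [sylvesterOp, mul_comm]

theorem norm_eigenIndicator_le_one (f : ι → ℝ) (s : Set ℝ) : ‖eigenIndicator f s‖ ≤ 1 := by
  rw [eigenIndicator, l2_opNorm_diagonal, pi_norm_le_iff_of_nonneg zero_le_one]
  intro i
  split_ifs <;> simp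

theorem one_le_norm_eigenIndicator_of_mem {f : ι → ℝ} {s : Set ℝ} {j : ι} (hj : f j ∈ s) :
    1 ≤ ‖eigenIndicator f s‖ := by
  rw [eigenIndicator, l2_opNorm_diagonal]
  simpa [hj] using norm_le_pi_norm (fun i ↦ if f i ∈ s then (1 : ℂ) else 0) j

theorem norm_eigenIndicator_mul_mul_eigenIndicator_le (f g : ι → ℝ) (s t : Set ℝ)
    (A : Matrix ι ι ℂ) : ‖eigenIndicator f s * A * eigenIndicator g t‖ ≤ ‖A‖ :=
  calc _ ≤ ‖eigenIndicator f s‖ * ‖A‖ * ‖eigenIndicator g t‖ :=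
        (l2_opNorm_mul _ _).trans (by gcongr; exact l2_opNorm_mul _ _)
    _ ≤ 1 * ‖A‖ * 1 := by gcongr <;> exact norm_eigenIndicator_le_one _ _
    _ = ‖A‖ := by ring

theorem norm_eigenIndicator_mul_mul_le_of_separated (lam mu : ι → ℝ) (M : Matrix ι ι ℂ)
    {s t : Set ℝ} {c L δ : ℝ} (hs : ∀ i, lam i ∈ s → |lam i - c| ≤ L)
    (ht : ∀ j, mu j ∈ t → L + δ ≤ |mu j - c|) (hδ : 0 < δ) :
    ‖eigenIndicator lam s * M * eigenIndicator mu t‖ ≤ ‖sylvesterOp lam mu M‖ / δ := by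
  obtain ⟨i₀, hi₀⟩ | hs_empty := em (∃ i, lam i ∈ s)
  swap
  · simp [eigenIndicator, not_exists.mp hs_empty]
    positivity
  have hL : 0 ≤ L := (abs_nonneg _).trans (hs i₀ hi₀)
  have hmu : ∀ j, mu j ∈ t → (mu j - c : ℂ) ≠ 0 := fun j hj ↦ by
    rw [← Complex.ofReal_sub, Complex.ofReal_ne_zero, ← abs_pos]
    linarith [ht j hj]
  -- `X = D M E` solves `X Q = P X + D R E`, where `P` is `Λ - c` on `D` and `Q` is `Μ - c` on `E`,
  -- padded with `L + δ` off `E` to make it invertible.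
  refine (norm_le_div_of_mul_eq_mul_add (L := L)
    (Y := eigenIndicator lam s * sylvesterOp lam mu M * eigenIndicator mu t)
    (P := diagonal fun i ↦ if lam i ∈ s then (lam i - c : ℂ) else 0)
    (Q := diagonal fun j ↦ if mu j ∈ t then (mu j - c : ℂ) else (L + δ : ℝ))
    (Q' := diagonal fun j ↦ if mu j ∈ t then (mu j - c : ℂ)⁻¹ else ((L + δ : ℝ) : ℂ)⁻¹)
    ?_ ?_ ?_ ?_ hδ).trans ?_
  · ext i j
    simp only [eigenIndicator, sylvesterOp, mul_diagonal, diagonal_mul, Matrix.add_apply,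
      Matrix.sub_apply]
    split_ifs <;> ring
  · rw [diagonal_mul_diagonal, ← diagonal_one]
    congr 1
    ext j
    split_ifs with hj
    · exact mul_inv_cancel₀ (hmu j hj)
    · exact mul_inv_cancel₀ (by norm_cast; linarith)
  · rw [l2_opNorm_diagonal, pi_norm_le_iff_of_nonneg hL]
    intro i
    split_ifs with hi
    · simpa [← Complex.ofReal_sub] using hs i hi
    · simpa using hL
  · rw [l2_opNorm_diagonal, pi_norm_le_iff_of_nonneg (by positivity)]
    intro j
    split_ifs with hj
    · rw [norm_inv, ← Complex.ofReal_sub, Complex.norm_real, Real.norm_eq_abs]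
      exact inv_anti₀ (by positivity) (ht j hj)
    · rw [norm_inv, Complex.norm_real, Real.norm_of_nonneg (by positivity)]
  · gcongr
    exact norm_eigenIndicator_mul_mul_eigenIndicator_le _ _ _ _ _

theorem norm_eigenIndicator_mul_mul_le_of_separated' (lam mu : ι → ℝ) (M : Matrix ι ι ℂ)
    {s t : Set ℝ} {c L δ : ℝ} (hs : ∀ i, lam i ∈ s → L + δ ≤ |lam i - c|)
    (ht : ∀ j, mu j ∈ t → |mu j - c| ≤ L) (hδ : 0 < δ) :
    ‖eigenIndicator lam s * M * eigenIndicator mu t‖ ≤ ‖sylvesterOp lam mu M‖ / δ :=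
  calc ‖eigenIndicator lam s * M * eigenIndicator mu t‖
      = ‖eigenIndicator mu t * Mᴴ * eigenIndicator lam s‖ := by
        rw [← l2_opNorm_conjTranspose]
        simp [conjTranspose_mul, mul_assoc]
    _ ≤ ‖sylvesterOp mu lam Mᴴ‖ / δ :=
        norm_eigenIndicator_mul_mul_le_of_separated mu lam Mᴴ ht hs hδ
    _ = ‖sylvesterOp lam mu M‖ / δ := by
        rw [← l2_opNorm_conjTranspose (sylvesterOp lam mu M), conjTranspose_sylvesterOp, norm_neg]

theorem exists_abs_sub_le_norm_sylvesterOp (lam mu : ι → ℝ) {M : Matrix ι ι ℂ}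
    (hM : M ∈ unitary (Matrix ι ι ℂ)) (j : ι) : ∃ i, |mu j - lam i| ≤ ‖sylvesterOp lam mu M‖ := by
  have : Nonempty ι := ⟨j⟩
  obtain ⟨i, hi⟩ := Finite.exists_min fun i ↦ |mu j - lam i|
  refine ⟨i, not_lt.1 fun h ↦ ?_⟩
  have hpos : 0 < |mu j - lam i| := (norm_nonneg _).trans_lt h
  have hE := norm_eigenIndicator_mul_mul_le_of_separated' lam mu M (s := Set.univ) (t := {mu j})
    (c := mu j) (L := 0) (fun i' _ ↦ by simpa [abs_sub_comm] using hi i') (by simp_all) hpos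
  rw [eigenIndicator_univ, one_mul, CStarRing.norm_mem_unitary_mul _ hM] at hE
  linarith [one_le_norm_eigenIndicator_of_mem (Set.mem_singleton (mu j)), (div_lt_one hpos).2 h]

theorem norm_eigenIndicator_Icc_mul_sub_mul_le (lam mu : ι → ℝ) (M : Matrix ι ι ℂ)
    {a b r g : ℝ} (hr : 0 ≤ r) (hrg : r < g)
    (hlam : ∀ i, lam i ∈ Set.Icc a b ∨ lam i ≤ a - g ∨ b + g ≤ lam i)
    (hmu : ∀ j, mu j ∈ Set.Icc (a - r) (b + r) ∨ mu j ≤ a - g ∨ b + g ≤ mu j) :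
    ‖eigenIndicator lam (Set.Icc a b) * M - M * eigenIndicator mu (Set.Icc (a - r) (b + r))‖ ≤
      2 * ‖sylvesterOp lam mu M‖ / (g - r) := by
  have hfar {x : ℝ} (h : x ≤ a - g ∨ b + g ≤ x) : (b - a) / 2 + g ≤ |x - (a + b) / 2| :=
    le_abs.2 (h.symm.imp (fun h ↦ by linarith) fun h ↦ by linarith)
  have h₁ := norm_eigenIndicator_mul_mul_le_of_separated lam mu M (s := Set.Icc a b)
    (t := (Set.Icc (a - r) (b + r))ᶜ) (L := (b - a) / 2)
    (fun i hi ↦ abs_le.2 ⟨by linarith [hi.1], by linarith [hi.2]⟩)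
    (fun j hj ↦ hfar ((hmu j).resolve_left hj)) (by linarith)
  have h₂ := norm_eigenIndicator_mul_mul_le_of_separated' lam mu M (s := (Set.Icc a b)ᶜ)
    (t := Set.Icc (a - r) (b + r)) (c := (a + b) / 2) (L := (b - a) / 2 + r) (δ := g - r)
    (fun i hi ↦ by linarith [hfar ((hlam i).resolve_left hi)])
    (fun j hj ↦ abs_le.2 ⟨by linarith [hj.1], by linarith [hj.2]⟩) (by linarith)
  have hsplit (D E : Matrix ι ι ℂ) : D * M - M * E = D * M * (1 - E) - (1 - D) * M * E := by
    noncomm_ring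
  rw [hsplit, one_sub_eigenIndicator, one_sub_eigenIndicator]
  calc _ ≤ _ := norm_sub_le _ _
    _ ≤ ‖sylvesterOp lam mu M‖ / (g - r) + ‖sylvesterOp lam mu M‖ / (g - r) :=
      add_le_add (h₁.trans (div_le_div_of_nonneg_left (norm_nonneg _) (by linarith)
        (by linarith))) h₂
    _ = 2 * ‖sylvesterOp lam mu M‖ / (g - r) := by ring

end eigenIndicator

theorem mem_Icc_or_far_of_abs_sub_le {x y a b Δ : ℝ}
    (hy : y ∈ Set.Icc a b ∨ y ≤ a - Δ ∨ b + Δ ≤ y) (hxy : |x - y| ≤ Δ / 4) :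
    x ∈ Set.Icc (a - Δ / 4) (b + Δ / 4) ∨ x ≤ a - Δ / 4 - Δ / 2 ∨ b + Δ / 4 + Δ / 2 ≤ x := by
  rw [abs_le] at hxy
  rcases hy with ⟨h₁, h₂⟩ | h | h
  · exact Or.inl ⟨by linarith, by linarith⟩
  · exact Or.inr (Or.inl (by linarith))
  · exact Or.inr (Or.inr (by linarith))

/-- Davis–Kahan / Weyl subspace perturbation. If `P` projects onto the eigenvalues
of `H` in `[a,b]`, separated from the rest of the spectrum by a gap `Δ`, and `‖V‖ ≤ Δ/4`, then
the spectral projector `Ptil` of `H̃ = H + V` onto `[a - Δ/4, b + Δ/4]` exists, its eigenvalues are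
separated from the remaining spectrum of `H̃` by at least `Δ/2`, and `‖P - Ptil‖ ≤ 8‖V‖/Δ`. -/
theorem spectral_projector_perturbation {n : ℕ} (H V : Matrix (Fin n) (Fin n) ℂ)
    (hH : H.IsHermitian) (hHV : (H + V).IsHermitian)
    (a b Δ : ℝ) (hΔ : 0 < Δ)
    (hgap : ∀ i, hH.eigenvalues i ∈ Set.Icc a b ∨
      hH.eigenvalues i ≤ a - Δ ∨ b + Δ ≤ hH.eigenvalues i)
    (hV : ‖V‖ ≤ Δ / 4) :
    ∃ Ptil : Matrix (Fin n) (Fin n) ℂ,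
      Ptil = specProj hHV (Set.Icc (a - Δ / 4) (b + Δ / 4)) ∧
      (∀ i, hHV.eigenvalues i ∈ Set.Icc (a - Δ / 4) (b + Δ / 4) ∨
        hHV.eigenvalues i ≤ a - Δ / 4 - Δ / 2 ∨ b + Δ / 4 + Δ / 2 ≤ hHV.eigenvalues i) ∧
      ‖specProj hH (Set.Icc a b) - Ptil‖ ≤ 8 * ‖V‖ / Δ := by
  have hU := hH.eigenvectorUnitary.2
  have hW := hHV.eigenvectorUnitary.2
  set M := star (hH.eigenvectorUnitary : Matrix (Fin n) (Fin n) ℂ) * hHV.eigenvectorUnitary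
  have hM : M ∈ unitary _ := mul_mem (Unitary.star_mem hU) hW
  have hR : ‖sylvesterOp hH.eigenvalues hHV.eigenvalues M‖ = ‖V‖ := by
    rw [sylvesterOp, ← Unitary.star_mul_sub_mul_eq hU hW hH.star_eigenvectorUnitary_mul_mul
      hHV.star_eigenvectorUnitary_mul_mul, add_sub_cancel_left, CStarRing.norm_star_mul_mul hU hW]
  have hgap' := fun j ↦ (exists_abs_sub_le_norm_sylvesterOp _ _ hM j).elim
    fun i hi ↦ mem_Icc_or_far_of_abs_sub_le (hgap i) (hi.trans (hR.trans_le hV))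
  refine ⟨_, rfl, hgap', ?_⟩
  calc _ = ‖eigenIndicator hH.eigenvalues (Set.Icc a b) * M -
        M * eigenIndicator hHV.eigenvalues (Set.Icc (a - Δ / 4) (b + Δ / 4))‖ :=
      CStarRing.norm_mul_mul_star_sub_mul_mul_star hU hW _ _
    _ ≤ 2 * ‖V‖ / (Δ / 2 - Δ / 4) := hR ▸ norm_eigenIndicator_Icc_mul_sub_mul_le _ _ M
      (by positivity) (by linarith)
      (fun i ↦ (hgap i).imp_right (Or.imp (fun h ↦ by linarith) fun h ↦ by linarith))
      (fun j ↦ (hgap' j).imp_right (Or.imp (fun h ↦ by linarith) fun h ↦ by linarith))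
    _ = 8 * ‖V‖ / Δ := by field_simp; ring
end

section
/- (Integration by parts for the windowed operator Fourier transform.) Let H be Hermitian, A an operator, A(t) = e^{iHt} A e^{−iHt}, and Â(ω) = (2πτ)^{−1/2} ∫_{−τ/2}^{τ/2} A(t) e^{−iωt} dt. Then [H, Â(ω)] = ω Â(ω) + (i√(2πτ))^{−1} (A(τ/2) e^{−iωτ/2} − A(−τ/2) e^{iωτ/2}). -/
open Matrix MeasureTheory Complex
open scoped Matrix.Norms.L2Operator

/-- Heisenberg evolution `A(t) = e^{iHt} A e^{-iHt}`. -/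
noncomputable def heisEvol {n : ℕ} (H A : Matrix (Fin n) (Fin n) ℂ) (t : ℝ) :
    Matrix (Fin n) (Fin n) ℂ :=
  NormedSpace.exp ((Complex.I * t) • H) * A * NormedSpace.exp ((-(Complex.I * t)) • H)

/-- The operator Fourier transform with the uniform window of width `τ`:
`Â(ω) = (2πτ)^{-1/2} ∫_{-τ/2}^{τ/2} A(t) e^{-iωt} dt`. -/
noncomputable def oftWin {n : ℕ} (H A : Matrix (Fin n) (Fin n) ℂ) (τ ω : ℝ) :
    Matrix (Fin n) (Fin n) ℂ :=
  ((Real.sqrt (2 * Real.pi * τ) : ℂ))⁻¹ •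
    ∫ t in (-(τ / 2))..(τ / 2), Complex.exp (-(Complex.I * ω * t)) • heisEvol H A t

/-! The Heisenberg evolution solves `A'(t) = i[H, A(t)]`, so the integrand `g(t) = e^{-iωt} A(t)`
satisfies `g' = L g` for the linear map `L X = i([H, X] - ωX)`. Since `L` commutes with the
integral, the fundamental theorem of calculus gives `L (∫ g) = g(τ/2) - g(-τ/2)`; solving for
the commutator and dividing by `√(2πτ)` is the claim. -/

open NormedSpace in
theorem hasDerivAt_exp_smul_mul_mul_exp_neg_smul {𝔸 : Type*} [NormedRing 𝔸] [NormedAlgebra ℝ 𝔸]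
    [CompleteSpace 𝔸] (M X : 𝔸) (t : ℝ) :
    HasDerivAt (fun s : ℝ => exp (s • M) * X * exp ((-s) • M))
      (M * (exp (t • M) * X * exp ((-t) • M)) - exp (t • M) * X * exp ((-t) • M) * M) t := by
  have hneg : HasDerivAt (fun s : ℝ => exp ((-s) • M)) (-(exp ((-t) • M) * M)) t :=
    ((hasDerivAt_exp_smul_const M (-t)).scomp t (hasDerivAt_neg t)).congr_deriv (neg_one_smul ℝ _)
  refine (((hasDerivAt_exp_smul_const' M t).mul_const X).mul hneg).congr_deriv ?_
  noncomm_ring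

theorem ContinuousLinearMap.apply_intervalIntegral_eq_sub_of_hasDerivAt {𝕜 E : Type*} [RCLike 𝕜]
    [NormedAddCommGroup E] [NormedSpace ℝ E] [NormedSpace 𝕜 E] [CompleteSpace E]
    (L : E →L[𝕜] E) {f : ℝ → E} {a b : ℝ} (hf : ∀ t ∈ Set.uIcc a b, HasDerivAt f (L (f t)) t) :
    L (∫ t in a..b, f t) = f b - f a := by
  have hcont : ContinuousOn f (Set.uIcc a b) := HasDerivAt.continuousOn hf
  rw [← L.intervalIntegral_comp_comm hcont.intervalIntegrable]
  exact intervalIntegral.integral_eq_sub_of_hasDerivAt hf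
    (L.continuous.comp_continuousOn hcont).intervalIntegrable

section

variable {n : ℕ} (H A : Matrix (Fin n) (Fin n) ℂ)

theorem heisEvol_eq_exp_real_smul :
    heisEvol H A =
      fun t : ℝ => NormedSpace.exp (t • (I • H)) * A * NormedSpace.exp ((-t) • (I • H)) := by
  funext t
  simp only [heisEvol, ← algebraMap_smul ℂ t, ← algebraMap_smul ℂ (-t), smul_smul,
    Complex.coe_algebraMap, ofReal_neg, mul_comm _ I, mul_neg]

theorem hasDerivAt_heisEvol (t : ℝ) :
    HasDerivAt (heisEvol H A) (I • (H * heisEvol H A t - heisEvol H A t * H)) t := by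
  rw [heisEvol_eq_exp_real_smul]
  refine (hasDerivAt_exp_smul_mul_mul_exp_neg_smul (I • H) A t).congr_deriv ?_
  simp only [smul_sub, smul_mul_assoc, mul_smul_comm]

theorem hasDerivAt_cexp_smul_heisEvol (ω t : ℝ) :
    HasDerivAt (fun s : ℝ => exp (-(I * ω * s)) • heisEvol H A s)
      (I • (H * (exp (-(I * ω * t)) • heisEvol H A t) - exp (-(I * ω * t)) • heisEvol H A t * H
        - (ω : ℂ) • exp (-(I * ω * t)) • heisEvol H A t)) t := by
  have hexp : HasDerivAt (fun s : ℝ => exp (-(I * ω * s))) (exp (-(I * ω * t)) * -(I * ω)) t := by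
    simpa using ((hasDerivAt_id (t : ℂ)).const_mul (-(I * ω))).cexp.comp_ofReal
  refine (hexp.smul (hasDerivAt_heisEvol H A t)).congr_deriv ?_
  simp only [smul_sub, smul_mul_assoc, mul_smul_comm, smul_smul]
  module

end

theorem oft_integration_by_parts_general {n : ℕ} (H A : Matrix (Fin n) (Fin n) ℂ)
    (τ : ℝ) (ω : ℝ) :
    H * oftWin H A τ ω - oftWin H A τ ω * H
      = (ω : ℂ) • oftWin H A τ ω +
        (Complex.I * (Real.sqrt (2 * Real.pi * τ) : ℂ))⁻¹ •
          (Complex.exp (-(Complex.I * ω * (τ / 2))) • heisEvol H A (τ / 2)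
            - Complex.exp (Complex.I * ω * (τ / 2)) • heisEvol H A (-(τ / 2))) := by
  set g := fun t : ℝ => exp (-(I * ω * t)) • heisEvol H A t
  set S := ∫ t in (-(τ / 2))..(τ / 2), g t
  let L : Matrix (Fin n) (Fin n) ℂ →L[ℂ] Matrix (Fin n) (Fin n) ℂ :=
    I • (ContinuousLinearMap.mul ℂ _ H - (ContinuousLinearMap.mul ℂ _).flip H - (ω : ℂ) • 1)
  have hS : I • (H * S - S * H - (ω : ℂ) • S) = g (τ / 2) - g (-(τ / 2)) :=
    L.apply_intervalIntegral_eq_sub_of_hasDerivAt fun t _ =>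
      hasDerivAt_cexp_smul_heisEvol H A ω t
  have hcomm : H * S - S * H = (ω : ℂ) • S + I⁻¹ • (g (τ / 2) - g (-(τ / 2))) := by
    rw [← hS, smul_smul, inv_mul_cancel₀ I_ne_zero, one_smul]
    abel
  rw [oftWin, mul_smul_comm, smul_mul_assoc, ← smul_sub, hcomm, smul_add,
    smul_comm _ (ω : ℂ), smul_smul, mul_inv, mul_comm I⁻¹]
  simp only [g, smul_smul, ofReal_neg, mul_neg, neg_neg, ofReal_div, ofReal_ofNat]

/-- Integration by parts for the windowed operator Fourier transform:
`[H, Â(ω)] = ω Â(ω) + (i√(2πτ))⁻¹ (A(τ/2) e^{-iωτ/2} - A(-τ/2) e^{iωτ/2})`. -/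
theorem oft_integration_by_parts {n : ℕ} (H A : Matrix (Fin n) (Fin n) ℂ)
    (hH : H.IsHermitian) (τ : ℝ) (hτ : 0 < τ) (ω : ℝ) :
    H * oftWin H A τ ω - oftWin H A τ ω * H
      = (ω : ℂ) • oftWin H A τ ω +
        (Complex.I * (Real.sqrt (2 * Real.pi * τ) : ℂ))⁻¹ •
          (Complex.exp (-(Complex.I * ω * (τ / 2))) • heisEvol H A (τ / 2)
            - Complex.exp (Complex.I * ω * (τ / 2)) • heisEvol H A (-(τ / 2))) :=
  oft_integration_by_parts_general H A τ ω
end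

section
/- (Norm inequality from operator purification.) For any operator O, any finite families of operators {A_i}, {A'_j} on the same Hilbert space, and any scalar matrix G = (G_{ij}), one has ‖Σ_{i,j} A_i† O A'_j G_{ij}‖ ≤ ‖G‖ · ‖O‖ · sqrt(‖Σ_i A_i† A_i‖ · ‖Σ_j A'_j† A'_j‖). -/
/-!
Stack the families into the purifications `V = Σ_i A_i ⊗ |i⟩` and `V' = Σ_j A'_j ⊗ |j⟩`. Then
`Σ_{i,j} G_{ij} A_i† O A'_j = V† (O ⊗ G) V'`, the C⋆-identity gives
`‖V‖ = √‖Σ_i A_i† A_i‖` and `‖V'‖ = √‖Σ_j A'_j† A'_j‖`, and `‖O ⊗ G‖ ≤ ‖O‖ ‖G‖` because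
`O ⊗ G = (O ⊗ 1)(1 ⊗ G)` and both factors are, up to reindexing, block diagonal with a single
repeated block.
-/

open Matrix
open scoped Matrix.Norms.L2Operator Kronecker

namespace Matrix

variable {𝕜 ι κ l m n o p : Type*} [RCLike 𝕜]

lemma blockDiagonal_mulVec_apply [Fintype n] [Fintype o] [DecidableEq o] (M : o → Matrix m n 𝕜)
    (x : n × o → 𝕜) (a : m) (k : o) :
    (blockDiagonal M *ᵥ x) (a, k) = (M k *ᵥ fun b => x (b, k)) a := by
  simp [mulVec, dotProduct, Fintype.sum_prod_type, blockDiagonal_apply]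

section L2OpNorm

variable [Fintype l] [Fintype m] [Fintype n] [Fintype o] [Fintype p]

lemma l2_opNorm_le_of_mulVec_le [DecidableEq n] (A : Matrix m n 𝕜) {c : ℝ} (hc : 0 ≤ c)
    (h : ∀ x : EuclideanSpace 𝕜 n, ‖(EuclideanSpace.equiv m 𝕜).symm (A *ᵥ x)‖ ≤ c * ‖x‖) :
    ‖A‖ ≤ c :=
  ContinuousLinearMap.opNorm_le_bound _ hc h

lemma l2_opNorm_reindex_le {m' n' : Type*} [Fintype m'] [Fintype n'] [DecidableEq n]
    [DecidableEq n'] (e : m ≃ m') (f : n ≃ n') (A : Matrix m n 𝕜) :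
    ‖reindex e f A‖ ≤ ‖A‖ := by
  refine l2_opNorm_le_of_mulVec_le _ (norm_nonneg A) fun x => ?_
  convert A.l2_opNorm_mulVec (WithLp.toLp 2 (x ∘ f)) using 2
  · simp [EuclideanSpace.norm_eq, submatrix_mulVec_equiv, e.symm.sum_comp (fun i => ‖_‖ ^ 2)]
  · simp [EuclideanSpace.norm_eq, f.sum_comp (fun i => ‖x i‖ ^ 2)]

lemma l2_opNorm_reindex {m' n' : Type*} [Fintype m'] [Fintype n'] [DecidableEq n]
    [DecidableEq n'] (e : m ≃ m') (f : n ≃ n') (A : Matrix m n 𝕜) :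
    ‖reindex e f A‖ = ‖A‖ :=
  (l2_opNorm_reindex_le e f A).antisymm <| by
    simpa using l2_opNorm_reindex_le e.symm f.symm (reindex e f A)

lemma l2_opNorm_blockDiagonal_le [DecidableEq n] [DecidableEq o] (M : o → Matrix m n 𝕜) {c : ℝ}
    (hc : 0 ≤ c) (hM : ∀ k, ‖M k‖ ≤ c) : ‖blockDiagonal M‖ ≤ c := by
  refine l2_opNorm_le_of_mulVec_le _ hc fun x => ?_
  set y : o → EuclideanSpace 𝕜 n := fun k => WithLp.toLp 2 fun b => x (b, k)
  have hblock : ∀ k, ∑ a, ‖(blockDiagonal M *ᵥ x) (a, k)‖ ^ 2 ≤ c ^ 2 * ‖y k‖ ^ 2 := by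
    intro k
    calc ∑ a, ‖(blockDiagonal M *ᵥ x) (a, k)‖ ^ 2
        = ‖(EuclideanSpace.equiv m 𝕜).symm (M k *ᵥ y k)‖ ^ 2 := by
          simp [EuclideanSpace.norm_sq_eq, blockDiagonal_mulVec_apply, y]
      _ ≤ (‖M k‖ * ‖y k‖) ^ 2 := by gcongr; exact l2_opNorm_mulVec _ _
      _ ≤ c ^ 2 * ‖y k‖ ^ 2 := by rw [mul_pow]; gcongr; exact hM k
  rw [← sq_le_sq₀ (norm_nonneg _) (by positivity), mul_pow, EuclideanSpace.norm_sq_eq,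
    EuclideanSpace.norm_sq_eq, Fintype.sum_prod_type_right, Fintype.sum_prod_type_right,
    Finset.mul_sum]
  refine Finset.sum_le_sum fun k _ => (hblock k).trans_eq ?_
  simp [EuclideanSpace.norm_sq_eq, y]

lemma l2_opNorm_kronecker_le [DecidableEq m] [DecidableEq p] (A : Matrix l m 𝕜)
    (B : Matrix n p 𝕜) : ‖A ⊗ₖ B‖ ≤ ‖A‖ * ‖B‖ := by
  classical
  have hA : ‖A ⊗ₖ (1 : Matrix n n 𝕜)‖ ≤ ‖A‖ := by
    rw [kronecker_one]
    exact l2_opNorm_blockDiagonal_le _ (norm_nonneg A) fun _ => le_rfl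
  have hB : ‖(1 : Matrix m m 𝕜) ⊗ₖ B‖ ≤ ‖B‖ := by
    rw [one_kronecker, l2_opNorm_reindex]
    exact l2_opNorm_blockDiagonal_le _ (norm_nonneg B) fun _ => le_rfl
  calc ‖A ⊗ₖ B‖ = ‖A ⊗ₖ (1 : Matrix n n 𝕜) * (1 : Matrix m m 𝕜) ⊗ₖ B‖ := by
        rw [← mul_kronecker_mul, Matrix.mul_one, Matrix.one_mul]
    _ ≤ ‖A‖ * ‖B‖ := (l2_opNorm_mul _ _).trans (by gcongr)

end L2OpNorm

section Purification

variable [Fintype ι] [Fintype κ] [Fintype m]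

def purification (A : ι → Matrix m n 𝕜) : Matrix (m × ι) n 𝕜 :=
  of fun x b => A x.2 x.1 b

lemma conjTranspose_purification_mul_purification (A B : ι → Matrix m n 𝕜) :
    (purification A)ᴴ * purification B = ∑ i, (A i)ᴴ * B i := by
  ext x y
  simp only [purification, mul_apply, sum_apply, Fintype.sum_prod_type, conjTranspose_apply,
    of_apply]
  exact Finset.sum_comm

lemma conjTranspose_purification_mul_kronecker_mul_purification (A : ι → Matrix m n 𝕜)
    (O : Matrix m m 𝕜) (G : Matrix ι κ 𝕜) (B : κ → Matrix m n 𝕜) :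
    (purification A)ᴴ * (O ⊗ₖ G) * purification B = ∑ i, ∑ j, G i j • ((A i)ᴴ * O * B j) := by
  ext x y
  simp only [purification, mul_apply, sum_apply, Fintype.sum_prod_type, conjTranspose_apply,
    of_apply, kroneckerMap_apply, smul_apply, smul_eq_mul, Finset.sum_mul, Finset.mul_sum]
  rw [Finset.sum_comm]
  conv_rhs => rw [Finset.sum_comm]
  refine Finset.sum_congr rfl fun j _ => ?_
  conv_rhs => rw [Finset.sum_comm]
  refine Finset.sum_congr rfl fun b _ => ?_
  rw [Finset.sum_comm]
  exact Finset.sum_congr rfl fun i _ => Finset.sum_congr rfl fun a _ => by ring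

lemma l2_opNorm_purification [Fintype n] [DecidableEq n] (A : ι → Matrix m n 𝕜) :
    ‖purification A‖ = √‖∑ i, (A i)ᴴ * A i‖ := by
  rw [← conjTranspose_purification_mul_purification, l2_opNorm_conjTranspose_mul_self,
    Real.sqrt_mul_self (norm_nonneg _)]

end Purification

end Matrix

/-- Norm inequality from operator purification:
`‖Σ_{i,j} A_i† O A'_j G_{ij}‖ ≤ ‖G‖ ‖O‖ √(‖Σ_i A_i† A_i‖ ‖Σ_j A'_j† A'_j‖)`. -/
theorem purification_norm_bound {n : ℕ} {ι κ : Type*} [Fintype ι] [Fintype κ]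
    [DecidableEq ι] [DecidableEq κ]
    (O : Matrix (Fin n) (Fin n) ℂ) (A : ι → Matrix (Fin n) (Fin n) ℂ)
    (A' : κ → Matrix (Fin n) (Fin n) ℂ) (G : Matrix ι κ ℂ) :
    ‖∑ i, ∑ j, G i j • ((A i)ᴴ * O * A' j)‖ ≤
      ‖G‖ * ‖O‖ * Real.sqrt (‖∑ i, (A i)ᴴ * A i‖ * ‖∑ j, (A' j)ᴴ * A' j‖) := by
  set V := purification A
  set V' := purification A'
  calc ‖∑ i, ∑ j, G i j • ((A i)ᴴ * O * A' j)‖ = ‖Vᴴ * (O ⊗ₖ G) * V'‖ := by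
        rw [conjTranspose_purification_mul_kronecker_mul_purification]
    _ ≤ ‖Vᴴ‖ * ‖O ⊗ₖ G‖ * ‖V'‖ :=
        (l2_opNorm_mul _ _).trans (by gcongr; exact l2_opNorm_mul _ _)
    _ ≤ ‖V‖ * (‖O‖ * ‖G‖) * ‖V'‖ := by
        rw [l2_opNorm_conjTranspose]
        gcongr
        exact l2_opNorm_kronecker_le O G
    _ = ‖G‖ * ‖O‖ * Real.sqrt (‖∑ i, (A i)ᴴ * A i‖ * ‖∑ j, (A' j)ᴴ * A' j‖) := by
        rw [l2_opNorm_purification, l2_opNorm_purification, Real.sqrt_mul (norm_nonneg _)]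
        ring
end

section
/- (Negative gradient condition implies all local minima are global.) Let H be Hermitian with ground space projector P_G, and L_a (a = 1,...,m) superoperators. Suppose there exists α ∈ ℝ^m_{≥0} with ‖α‖₁ = 1 such that −Σ_a α_a L_a†[H] ⪰ (2ε/δ)(I − P_G) − εI. Then any state ρ satisfying −Tr(L_a†[H] ρ) ≤ ε for all a obeys Tr(P_G ρ) ≥ 1 − δ. -/
/-!
Pairing the operator inequality with the state `ρ` keeps its sign, because the trace of a
product of two positive semidefinite matrices is nonnegative. The `α`-average of the first-order
conditions bounds the gradient term by `ε`, and what remains is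
`(2ε/δ) (1 - Tr(P_G ρ)) ≤ 2ε`.
-/

open Matrix
open scoped ComplexOrder

theorem Matrix.PosSemidef.trace_mul_nonneg {ι 𝕜 : Type*} [Fintype ι] [RCLike 𝕜]
    {A B : Matrix ι ι 𝕜} (hA : A.PosSemidef) (hB : B.PosSemidef) : 0 ≤ (A * B).trace := by
  classical
  open scoped MatrixOrder in
  obtain ⟨C, rfl⟩ := CStarAlgebra.nonneg_iff_eq_star_mul_self.mp hB.nonneg
  rw [← Matrix.mul_assoc, trace_mul_comm, ← Matrix.mul_assoc]
  exact (hA.mul_mul_conjTranspose_same C).trace_nonneg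

theorem negative_gradient_implies_global_general {n m : ℕ}
    (H PG ρ : Matrix (Fin n) (Fin n) ℂ)
    (Ld : Fin m → (Matrix (Fin n) (Fin n) ℂ →ₗ[ℂ] Matrix (Fin n) (Fin n) ℂ))
    (ε δ : ℝ) (hε : 0 < ε) (hδ : 0 < δ)
    (α : Fin m → ℝ) (hα : ∀ a, 0 ≤ α a) (hα1 : (∑ a, α a) = 1)
    (hNGC : ((-(∑ a, α a • (Ld a H))) -
      ((2 * ε / δ) • ((1 : Matrix (Fin n) (Fin n) ℂ) - PG)
        - ε • (1 : Matrix (Fin n) (Fin n) ℂ))).PosSemidef)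
    (hρ : ρ.PosSemidef) (hρ1 : ρ.trace = 1)
    (hLM : ∀ a, -(((Ld a H) * ρ).trace.re) ≤ ε) :
    1 - δ ≤ (PG * ρ).trace.re := by
  have hgrad : -∑ a, α a * ((Ld a H) * ρ).trace.re ≤ ε :=
    calc -∑ a, α a * ((Ld a H) * ρ).trace.re = ∑ a, α a * -((Ld a H) * ρ).trace.re := by
          simp only [mul_neg, Finset.sum_neg_distrib]
      _ ≤ ∑ a, α a * ε := Finset.sum_le_sum fun a _ => mul_le_mul_of_nonneg_left (hLM a) (hα a)
      _ = ε := by rw [← Finset.sum_mul, hα1, one_mul]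
  have hpaired := (Complex.nonneg_iff.mp (hNGC.trace_mul_nonneg hρ)).1
  simp only [Matrix.sub_mul, Matrix.neg_mul, Matrix.sum_mul, smul_mul_assoc, Matrix.one_mul,
    trace_sub, trace_neg, trace_sum, trace_smul, hρ1, Complex.sub_re, Complex.neg_re,
    Complex.re_sum, Complex.real_smul, Complex.re_ofReal_mul, Complex.one_re] at hpaired
  have hgap : 2 * ε / δ * (1 - (PG * ρ).trace.re) ≤ 2 * ε := by linarith
  rw [div_mul_eq_mul_div, div_le_iff₀ hδ] at hgap
  nlinarith

/-- negative gradient condition implies all local minima are global. If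
`-Σ_a α_a L_a†[H] ⪰ (2ε/δ)(I - P_G) - ε I` for some probability vector `α`, then any state `ρ`
with `-Tr(L_a†[H] ρ) ≤ ε` for all `a` satisfies `Tr(P_G ρ) ≥ 1 - δ`. -/
theorem negative_gradient_implies_global {n m : ℕ}
    (H PG ρ : Matrix (Fin n) (Fin n) ℂ) (hH : H.IsHermitian)
    (hPG : PG.IsHermitian) (hPG2 : PG * PG = PG)
    (Ld : Fin m → (Matrix (Fin n) (Fin n) ℂ →ₗ[ℂ] Matrix (Fin n) (Fin n) ℂ))
    (ε δ : ℝ) (hε : 0 < ε) (hδ : 0 < δ)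
    (α : Fin m → ℝ) (hα : ∀ a, 0 ≤ α a) (hα1 : (∑ a, α a) = 1)
    (hNGC : ((-(∑ a, α a • (Ld a H))) -
      ((2 * ε / δ) • ((1 : Matrix (Fin n) (Fin n) ℂ) - PG)
        - ε • (1 : Matrix (Fin n) (Fin n) ℂ))).PosSemidef)
    (hρ : ρ.PosSemidef) (hρ1 : ρ.trace = 1)
    (hLM : ∀ a, -(((Ld a H) * ρ).trace.re) ≤ ε) :
    1 - δ ≤ (PG * ρ).trace.re :=
  negative_gradient_implies_global_general H PG ρ Ld ε δ hε hδ α hα hα1 hNGC hρ hρ1 hLM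
end

section
/- (Cooling by gradient descent decreases energy.) Let H be Hermitian with ‖H‖_∞ ≤ B, B ≥ 1, and let {L_a} be superoperators such that ‖L_a†‖_{∞→∞} ≤ 3B' and ‖L_a†(H)‖_∞ ≤ 3B for all a (so the second derivative of energy along any single direction is bounded by 9B² in magnitude, assuming B' ≤ B). Suppose g is a real number with |g − Tr(H L_{a*}[ρ])| < 0.01·ε̃ and g < −0.99·ε̃ for some index a* and some 0 < ε̃ < 1/2. Then for the step size s = |g|/(9B²), the state ρ_next = exp(s L_{a*})(ρ) satisfies Tr(H ρ_next) < Tr(Hρ) − ε̃²/(20B²). -/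
open Matrix
open scoped ComplexOrder

attribute [local instance] Matrix.normedAddCommGroup Matrix.normedSpace

/-- The operator (spectral) norm `‖A‖_∞` of a complex matrix. -/
noncomputable def opNorm {n : ℕ} (A : Matrix (Fin n) (Fin n) ℂ) : ℝ :=
  ‖Matrix.toEuclideanCLM (𝕜 := ℂ) A‖

instance cooling_isTopologicalRing (n : ℕ) :
    IsTopologicalRing (Matrix (Fin n) (Fin n) ℂ →L[ℂ] Matrix (Fin n) (Fin n) ℂ) :=
  letI : NormedRing (Matrix (Fin n) (Fin n) ℂ →L[ℂ] Matrix (Fin n) (Fin n) ℂ) :=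
    ContinuousLinearMap.toNormedRing
  NonUnitalSeminormedRing.toIsTopologicalRing

/-! Expanding `e^{sL}` as a power series, the energy `E(s) = Re Tr(H e^{sL} ρ)` equals
`∑ sᵏ/k! · Re Tr(H Lᵏ ρ)`. Moving `Lᵏ` to the Heisenberg side, `Tr(H Lᵏ ρ) = Tr((L†)ᵏ(H) ρ)`,
and tracing against a state is bounded by the operator norm, so the `k`-th coefficient is at
most `(3B)ᵏ` for `k ≥ 1`. Since `k! ≥ 2·3ᵏ⁻²`, with `x = 3Bs` this gives
`E(s) ≤ E(0) + s E'(0) + x²/(2(1 - x/3))`. For `s = |g|/(9B²)` the first-order term is below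
`-(98/99) x²`, where `x = |g|/(3B) ≤ 11/10`.

As `e^{sL}ρ` need not be a state, the remainder is the whole exponential tail rather than
`9B²s²/2`; when `x` is not small, the extra loss is absorbed using `ε̃ < 1/2`. -/

open scoped Nat

lemma pow_add_two_div_factorial_le {x : ℝ} (hx : 0 ≤ x) (k : ℕ) :
    x ^ (k + 2) / (k + 2)! ≤ x ^ 2 / 2 * (x / 3) ^ k := by
  have hfac : (2 * 3 ^ k : ℝ) ≤ (k + 2)! := by
    rw [add_comm k]; exact_mod_cast Nat.factorial_mul_pow_le_factorial (m := 2) (n := k)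
  calc x ^ (k + 2) / (k + 2)! ≤ x ^ (k + 2) / (2 * 3 ^ k) := by gcongr
    _ = x ^ 2 / 2 * (x / 3) ^ k := by rw [div_pow]; ring

lemma le_of_hasSum_pow_div_factorial_mul {s K E : ℝ} {c : ℕ → ℝ}
    (hE : HasSum (fun k => s ^ k / k ! * c k) E) (hs : 0 ≤ s) (hK : 0 ≤ K) (hKs : K * s < 3)
    (hc : ∀ k, |c (k + 2)| ≤ K ^ (k + 2)) :
    E ≤ c 0 + s * c 1 + (K * s) ^ 2 / (2 * (1 - K * s / 3)) := by
  have htail := (hasSum_nat_add_iff' 2).mpr hE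
  have hgeom : HasSum (fun k : ℕ => (K * s) ^ 2 / 2 * (K * s / 3) ^ k)
      ((K * s) ^ 2 / 2 * (1 - K * s / 3)⁻¹) :=
    (hasSum_geometric_of_lt_one (by positivity) (by linarith)).mul_left _
  have hterm (k : ℕ) :
      s ^ (k + 2) / (k + 2)! * c (k + 2) ≤ (K * s) ^ 2 / 2 * (K * s / 3) ^ k :=
    calc s ^ (k + 2) / (k + 2)! * c (k + 2) ≤ s ^ (k + 2) / (k + 2)! * K ^ (k + 2) := by
          gcongr; exact (le_abs_self _).trans (hc k)
      _ = (K * s) ^ (k + 2) / (k + 2)! := by ring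
      _ ≤ _ := pow_add_two_div_factorial_le (by positivity) k
  have hhead : ∑ i ∈ Finset.range 2, s ^ i / i ! * c i = c 0 + s * c 1 := by
    simp [Finset.sum_range_succ]
  have hgeom_sum :
      (K * s) ^ 2 / 2 * (1 - K * s / 3)⁻¹ = (K * s) ^ 2 / (2 * (1 - K * s / 3)) := by
    rw [← div_eq_mul_inv, div_div]
  linarith [hasSum_le hterm htail hgeom]

lemma hasSum_exp_smul_apply {𝕜 E : Type*} [RCLike 𝕜] [NormedAddCommGroup E] [NormedSpace 𝕜 E]
    [CompleteSpace E] (L : E →L[𝕜] E) (t : 𝕜) (v : E) :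
    HasSum (fun k : ℕ => (t ^ k / k !) • (L ^ k) v) (NormedSpace.exp (t • L) v) := by
  have := (NormedSpace.exp_series_hasSum_exp' (𝕂 := 𝕜) (t • L)).mapL
    (ContinuousLinearMap.apply 𝕜 _ v)
  simpa [smul_pow, smul_smul, div_eq_inv_mul] using this

lemma hasSum_re_trace_mul_exp_smul_apply {n : ℕ} (H ρ : Matrix (Fin n) (Fin n) ℂ)
    (L : Matrix (Fin n) (Fin n) ℂ →L[ℂ] Matrix (Fin n) (Fin n) ℂ) (s : ℝ) :
    HasSum (fun k => s ^ k / k ! * (H * (L ^ k) ρ).trace.re)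
      (H * NormedSpace.exp ((s : ℂ) • L) ρ).trace.re := by
  let tr := (traceLinearMap (Fin n) ℂ ℂ ∘ₗ LinearMap.mulLeft ℂ H).toContinuousLinearMap
  have := ((hasSum_exp_smul_apply L (s : ℂ) ρ).mapL tr).mapL Complex.reCLM
  convert this using 2 with k
  · have hcoef : (s : ℂ) ^ k / k ! = ((s ^ k / k ! : ℝ) : ℂ) := by push_cast; rfl
    rw [hcoef, map_smul, smul_eq_mul, Complex.reCLM_apply, Complex.re_ofReal_mul]
    rfl
  · rfl

lemma norm_mulVec_dotProduct_star_le {n : ℕ} (A : Matrix (Fin n) (Fin n) ℂ) (v : Fin n → ℂ) :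
    ‖(A *ᵥ v) ⬝ᵥ star v‖ ≤ opNorm A * ‖WithLp.toLp 2 v‖ ^ 2 := by
  calc _ ≤ ‖WithLp.toLp 2 v‖ * ‖toEuclideanCLM (𝕜 := ℂ) A (WithLp.toLp 2 v)‖ :=
        norm_inner_le_norm (𝕜 := ℂ) (WithLp.toLp 2 v) (toEuclideanCLM (𝕜 := ℂ) A (WithLp.toLp 2 v))
    _ ≤ ‖WithLp.toLp 2 v‖ * (opNorm A * ‖WithLp.toLp 2 v‖) := by
        gcongr; exact ContinuousLinearMap.le_opNorm _ _
    _ = _ := by ring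

lemma norm_trace_mul_le_of_posSemidef {n : ℕ} (A M : Matrix (Fin n) (Fin n) ℂ)
    (hM : M.PosSemidef) :
    ‖(A * M).trace‖ ≤ opNorm A * M.trace.re := by
  obtain ⟨m, v, rfl⟩ := Matrix.posSemidef_iff_eq_sum_vecMulVec.mp hM
  simp only [Matrix.mul_sum, mul_vecMulVec, trace_sum, trace_vecMulVec]
  calc ‖∑ i, A *ᵥ v i ⬝ᵥ star (v i)‖ ≤ ∑ i, ‖A *ᵥ v i ⬝ᵥ star (v i)‖ := norm_sum_le _ _
    _ ≤ ∑ i, opNorm A * ‖WithLp.toLp 2 (v i)‖ ^ 2 :=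
        Finset.sum_le_sum fun i _ => norm_mulVec_dotProduct_star_le A (v i)
    _ = opNorm A * (∑ i, v i ⬝ᵥ star (v i)).re := by
        rw [← Finset.mul_sum, Complex.re_sum]
        congr 1
        refine Finset.sum_congr rfl fun i _ => ?_
        rw [← inner_self_eq_norm_sq (𝕜 := ℂ)]
        rfl

section HeisenbergPicture

variable {n : ℕ} {L Ld : Matrix (Fin n) (Fin n) ℂ →L[ℂ] Matrix (Fin n) (Fin n) ℂ}

lemma trace_mul_pow_apply (hdual : ∀ X Y, ((Ld X) * Y).trace = (X * L Y).trace) (k : ℕ)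
    (X Y : Matrix (Fin n) (Fin n) ℂ) : (X * (L ^ k) Y).trace = ((Ld ^ k) X * Y).trace := by
  induction k generalizing Y with
  | zero => rfl
  | succ k ih =>
    calc (X * (L ^ (k + 1)) Y).trace = (X * (L ^ k) (L Y)).trace := by rw [pow_succ]; rfl
      _ = (Ld ((Ld ^ k) X) * Y).trace := by rw [ih, hdual]
      _ = ((Ld ^ (k + 1)) X * Y).trace := by rw [pow_succ']; rfl

lemma opNorm_pow_apply_le {C : ℝ} (hC : 0 ≤ C) (hLd : ∀ X, opNorm (Ld X) ≤ C * opNorm X)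
    (k : ℕ) (X : Matrix (Fin n) (Fin n) ℂ) : opNorm ((Ld ^ k) X) ≤ C ^ k * opNorm X := by
  induction k with
  | zero => simp
  | succ k ih =>
    calc opNorm ((Ld ^ (k + 1)) X) = opNorm (Ld ((Ld ^ k) X)) := by rw [pow_succ']; rfl
      _ ≤ C * (C ^ k * opNorm X) := (hLd _).trans (by gcongr)
      _ = C ^ (k + 1) * opNorm X := by ring

lemma abs_re_trace_mul_pow_succ_apply_le
    (hdual : ∀ X Y, ((Ld X) * Y).trace = (X * L Y).trace)
    {C : ℝ} (hC : 0 ≤ C) (hLd : ∀ X, opNorm (Ld X) ≤ C * opNorm X)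
    {ρ : Matrix (Fin n) (Fin n) ℂ} (hρ : ρ.PosSemidef) (hρ1 : ρ.trace = 1)
    (H : Matrix (Fin n) (Fin n) ℂ) (k : ℕ) :
    |(H * (L ^ (k + 1)) ρ).trace.re| ≤ C ^ k * opNorm (Ld H) := by
  calc |(H * (L ^ (k + 1)) ρ).trace.re| ≤ ‖((Ld ^ (k + 1)) H * ρ).trace‖ := by
        rw [trace_mul_pow_apply hdual]; exact Complex.abs_re_le_norm _
    _ ≤ opNorm ((Ld ^ k) (Ld H)) := by
        simpa [hρ1, pow_succ] using norm_trace_mul_le_of_posSemidef ((Ld ^ (k + 1)) H) ρ hρ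
    _ ≤ C ^ k * opNorm (Ld H) := opNorm_pow_apply_le hC hLd k _

end HeisenbergPicture

lemma cooling_margin {x ε B : ℝ} (hB : 1 ≤ B) (hε : 0 < ε) (hε2 : ε < 1 / 2)
    (hx : 0.99 * ε < 3 * B * x) (hx1 : x ≤ 11 / 10) :
    ε ^ 2 / (20 * B ^ 2) < 98 / 99 * x ^ 2 - x ^ 2 / (2 * (1 - x / 3)) := by
  have hD : 0 < 2 * (1 - x / 3) := by linarith
  have hB2 : 0 < B ^ 2 := by positivity
  -- For `x ≤ 17/100` the tail is at most `x² / (2 (1 - 17/300)) = (150/283) x²`.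
  rcases le_or_gt x (17 / 100) with hsmall | hlarge
  · have hq : x ^ 2 / (2 * (1 - x / 3)) ≤ 150 / 283 * x ^ 2 := by
      rw [div_le_iff₀ hD]; nlinarith [sq_nonneg x]
    have hεx : ε < 3 * B * x / 0.99 := by rw [lt_div_iff₀ (by norm_num)]; linarith
    calc ε ^ 2 / (20 * B ^ 2) < (3 * B * x / 0.99) ^ 2 / (20 * B ^ 2) := by gcongr
      _ = 9 / (20 * 0.99 ^ 2) * x ^ 2 := by field_simp; ring
      _ ≤ (98 / 99 - 150 / 283) * x ^ 2 := by gcongr; norm_num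
      _ ≤ _ := by linarith
  · have hq : x ^ 2 / (2 * (1 - x / 3)) ≤ 98 / 99 * x ^ 2 - 1 / 80 := by
      rw [div_le_iff₀ hD]
      have hmid := mul_nonneg (sub_nonneg.2 hlarge.le) (sub_nonneg.2 hx1)
      nlinarith [mul_nonneg hmid (by linarith : (0 : ℝ) ≤ x)]
    calc ε ^ 2 / (20 * B ^ 2) ≤ ε ^ 2 / 20 := by
          gcongr; nlinarith
      _ < 1 / 80 := by nlinarith
      _ ≤ _ := by linarith

lemma gradient_step_decrease {B εt g c : ℝ} (hB : 1 ≤ B) (hε1 : 0 < εt) (hε2 : εt < 1 / 2)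
    (hc : |c| ≤ 3 * B) (hg1 : |g - c| < 0.01 * εt) (hg2 : g < -0.99 * εt) :
    3 * B * (|g| / (9 * B ^ 2)) < 3 ∧
      |g| / (9 * B ^ 2) * c + (3 * B * (|g| / (9 * B ^ 2))) ^ 2 /
        (2 * (1 - 3 * B * (|g| / (9 * B ^ 2)) / 3)) < -(εt ^ 2 / (20 * B ^ 2)) := by
  have hB0 : 0 < B := by linarith
  have hg : |g| = -g := abs_of_neg (by linarith)
  set x := |g| / (3 * B) with hx
  have hsx : 3 * B * (|g| / (9 * B ^ 2)) = x := by rw [hx]; field_simp; ring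
  have hgx : |g| = 3 * B * x := by rw [hx]; field_simp
  have hsg : |g| / (9 * B ^ 2) * |g| = x ^ 2 := by rw [hx]; field_simp; ring
  have hc_lt : c < g + 0.01 * εt := by linarith [(abs_lt.1 hg1).1]
  have hx1 : x < 11 / 10 := by
    have : |g| - |c| ≤ |g - c| := abs_sub_abs_le_abs_sub g c
    nlinarith
  have hstep : |g| / (9 * B ^ 2) * c ≤ -(98 / 99) * x ^ 2 := by
    calc |g| / (9 * B ^ 2) * c ≤ |g| / (9 * B ^ 2) * (|g| / 99 - |g|) := by
          gcongr; linarith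
      _ = -(98 / 99) * x ^ 2 := by rw [← hsg]; ring
  have hmargin := cooling_margin hB hε1 hε2 (by linarith) hx1.le
  rw [hsx]
  exact ⟨by linarith, by linarith⟩

theorem cooling_by_gradient_descent_general {n : ℕ} (B B' εt : ℝ)
    (hB : 1 ≤ B) (hB' : B' ≤ B) (hε1 : 0 < εt) (hε2 : εt < 1 / 2)
    (H ρ : Matrix (Fin n) (Fin n) ℂ)
    (hρ : ρ.PosSemidef) (hρ1 : ρ.trace = 1)
    (L Ld : Matrix (Fin n) (Fin n) ℂ →L[ℂ] Matrix (Fin n) (Fin n) ℂ)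
    (hdual : ∀ X Y, ((Ld X) * Y).trace = (X * L Y).trace)
    (hLd : ∀ X, opNorm (Ld X) ≤ 3 * B' * opNorm X)
    (hLdH : opNorm (Ld H) ≤ 3 * B)
    (g : ℝ) (hg1 : |g - (H * L ρ).trace.re| < 0.01 * εt) (hg2 : g < -0.99 * εt) :
    (H * (NormedSpace.exp (((|g| / (9 * B ^ 2) : ℝ) : ℂ) • L)) ρ).trace.re
      < (H * ρ).trace.re - εt ^ 2 / (20 * B ^ 2) := by
  have hLd' : ∀ X, opNorm (Ld X) ≤ 3 * B * opNorm X := fun X =>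
    (hLd X).trans (by gcongr; exact norm_nonneg _)
  have hderiv : ∀ k, |(H * (L ^ (k + 1)) ρ).trace.re| ≤ (3 * B) ^ (k + 1) := fun k =>
    calc _ ≤ (3 * B) ^ k * opNorm (Ld H) :=
          abs_re_trace_mul_pow_succ_apply_le hdual (by positivity) hLd' hρ hρ1 H k
      _ ≤ (3 * B) ^ (k + 1) := by rw [pow_succ]; gcongr
  obtain ⟨hstep_lt, hdecrease⟩ :=
    gradient_step_decrease hB hε1 hε2 (by simpa using hderiv 0) hg1 hg2
  have htaylor := le_of_hasSum_pow_div_factorial_mul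
    (hasSum_re_trace_mul_exp_smul_apply H ρ L (|g| / (9 * B ^ 2)))
    (by positivity) (by positivity) hstep_lt (fun k => hderiv (k + 1))
  simp only [pow_zero, pow_one, one_apply_eq_self] at htaylor
  linarith

/-- cooling by gradient descent decreases energy. If the approximate gradient `g`
along direction `a*` satisfies `|g - Tr(H L[ρ])| < 0.01 ε̃` and `g < -0.99 ε̃`, and the Heisenberg
adjoint `L†` satisfies `‖L†‖_{∞→∞} ≤ 3B'` and `‖L†(H)‖_∞ ≤ 3B` with `B' ≤ B`, `‖H‖_∞ ≤ B`,
`B ≥ 1`, then the step `s = |g|/(9B²)` decreases the energy: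
`Tr(H exp(sL)(ρ)) < Tr(Hρ) - ε̃²/(20B²)`. -/
theorem cooling_by_gradient_descent {n : ℕ} (B B' εt : ℝ)
    (hB : 1 ≤ B) (hB' : B' ≤ B) (hε1 : 0 < εt) (hε2 : εt < 1 / 2)
    (H ρ : Matrix (Fin n) (Fin n) ℂ) (hH : H.IsHermitian) (hHB : opNorm H ≤ B)
    (hρ : ρ.PosSemidef) (hρ1 : ρ.trace = 1)
    (L Ld : Matrix (Fin n) (Fin n) ℂ →L[ℂ] Matrix (Fin n) (Fin n) ℂ)
    (hdual : ∀ X Y, ((Ld X) * Y).trace = (X * L Y).trace)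
    (htp : ∀ X, (L X).trace = 0)
    (hLd : ∀ X, opNorm (Ld X) ≤ 3 * B' * opNorm X)
    (hLdH : opNorm (Ld H) ≤ 3 * B)
    (g : ℝ) (hg1 : |g - (H * L ρ).trace.re| < 0.01 * εt) (hg2 : g < -0.99 * εt) :
    (H * (NormedSpace.exp (((|g| / (9 * B ^ 2) : ℝ) : ℂ) • L)) ρ).trace.re
      < (H * ρ).trace.re - εt ^ 2 / (20 * B ^ 2) :=
  cooling_by_gradient_descent_general B B' εt hB hB' hε1 hε2 H ρ hρ hρ1 L Ld hdual hLd hLdH g hg1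
    hg2
end
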